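/- Let A be an n×n symmetric positive definite matrix with X = A⁻¹ satisfying tr(X) - log det(X) - n = 2b for some b > 0. Then every eigenvalue μ of A satisfies μ ≥ λ̄⁻¹, where λ̄ > 1 is the unique solution of λ̄ - log λ̄ - 1 = 2b. -/

import Mathlib

/-!
Writing `μᵢ` for the eigenvalues of `A`, the eigenvalues of `X = A⁻¹` are the `μᵢ⁻¹`, so
`tr X - log det X - n = ∑ᵢ φ(μᵢ⁻¹)` with `φ(x) = x - log x - 1`. Every term is nonnegative
(`log x ≤ x - 1`), hence `φ(μₖ⁻¹) ≤ 2b = φ(λ̄)` for each `k`. As `φ` is strictly increasing on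
`[1, ∞)` and `λ̄ > 1`, this forces `μₖ⁻¹ ≤ λ̄`.
-/

open Matrix Unitary ComplexOrder

namespace Real

lemma sub_log_sub_one_nonneg {x : ℝ} (hx : 0 < x) : 0 ≤ x - log x - 1 := by
  linarith [log_le_sub_one_of_pos hx]

lemma strictMonoOn_sub_log : StrictMonoOn (fun x => x - log x) (Set.Ici 1) := by
  intro y (hy : 1 ≤ y) x _ hyx
  have hy0 : 0 < y := one_pos.trans_le hy
  have hxy : 1 < x / y := (one_lt_div hy0).2 hyx
  -- `log (x / y) < x / y - 1 = (x - y) / y ≤ x - y`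
  have hlog : log x - log y < x / y - 1 := by
    rw [← log_div (hy0.trans hyx).ne' hy0.ne']
    exact log_lt_sub_one_of_pos (one_pos.trans hxy) hxy.ne'
  have hdiv : x / y - 1 ≤ x - y := by
    rw [div_sub_one hy0.ne']
    exact div_le_self (sub_pos.2 hyx).le hy
  simp only
  linarith

lemma le_of_sub_log_le_sub_log {x y : ℝ} (hy : 1 ≤ y) (h : x - log x ≤ y - log y) : x ≤ y := by
  by_contra! hyx
  exact h.not_gt (strictMonoOn_sub_log hy (hy.trans hyx.le : (1 : ℝ) ≤ x) hyx)

end Real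

namespace Matrix

variable {𝕜 : Type*} [RCLike 𝕜] {n : Type*} [Fintype n] [DecidableEq n] {A : Matrix n n 𝕜}

lemma IsHermitian.trace_cfc (hA : A.IsHermitian) (f : ℝ → ℝ) :
    (cfc f A).trace = ∑ i, (f (hA.eigenvalues i) : 𝕜) := by
  rw [hA.cfc_eq, IsHermitian.cfc, conjStarAlgAut_apply, trace_mul_cycle, coe_star_mul_self,
    one_mul, trace_diagonal]
  rfl

lemma IsHermitian.det_cfc (hA : A.IsHermitian) (f : ℝ → ℝ) :
    (cfc f A).det = ∏ i, (f (hA.eigenvalues i) : 𝕜) := by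
  rw [hA.cfc_eq, IsHermitian.cfc, conjStarAlgAut_apply, det_mul, mul_comm, det_mul, ← mul_assoc,
    ← det_mul, coe_star_mul_self, det_one, one_mul, det_diagonal]
  rfl

lemma PosDef.inv_eq_cfc (hA : A.PosDef) : A⁻¹ = cfc (·⁻¹ : ℝ → ℝ) A := by
  rw [cfc_ringInverse_id A hA.isUnit hA.1.isSelfAdjoint, nonsing_inv_eq_ringInverse]

lemma PosDef.trace_inv_sub_log_det_inv {A : Matrix n n ℝ} (hA : A.PosDef) :
    (A⁻¹).trace - Real.log (A⁻¹).det - Fintype.card n =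
      ∑ i, ((hA.1.eigenvalues i)⁻¹ - Real.log (hA.1.eigenvalues i)⁻¹ - 1) := by
  rw [hA.inv_eq_cfc, hA.1.trace_cfc, hA.1.det_cfc]
  simp only [RCLike.ofReal_real_eq_id, id]
  rw [Real.log_prod fun i _ => (inv_pos.2 (hA.eigenvalues_pos i)).ne']
  simp [Finset.sum_sub_distrib, Finset.sum_add_distrib]

end Matrix

theorem stmt_6_general {n : ℕ} (A : Matrix (Fin n) (Fin n) ℝ) (hA : A.PosDef)
    (b lam : ℝ) (hlam : 1 < lam)
    (hlameq : lam - Real.log lam - 1 = 2 * b)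
    (hX : (A⁻¹).trace - Real.log (A⁻¹).det - n = 2 * b) :
    ∀ k, lam⁻¹ ≤ hA.1.eigenvalues k := by
  intro k
  have hsum := Fintype.card_fin n ▸ hA.trace_inv_sub_log_det_inv
  rw [hX] at hsum
  have hk : (hA.1.eigenvalues k)⁻¹ - Real.log (hA.1.eigenvalues k)⁻¹ - 1 ≤ 2 * b :=
    hsum ▸ Finset.single_le_sum
      (fun i _ => Real.sub_log_sub_one_nonneg (inv_pos.2 (hA.eigenvalues_pos i)))
      (Finset.mem_univ k)
  have hinv_le : (hA.1.eigenvalues k)⁻¹ ≤ lam :=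
    Real.le_of_sub_log_le_sub_log hlam.le (by linarith)
  exact inv_le_of_inv_le₀ (hA.eigenvalues_pos k) hinv_le

theorem stmt_6 {n : ℕ} (A : Matrix (Fin n) (Fin n) ℝ) (hA : A.PosDef)
    (b lam : ℝ) (hb : 0 < b) (hlam : 1 < lam)
    (hlameq : lam - Real.log lam - 1 = 2 * b)
    (hX : (A⁻¹).trace - Real.log (A⁻¹).det - n = 2 * b) :
    ∀ k, lam⁻¹ ≤ hA.1.eigenvalues k :=
  stmt_6_general A hA b lam hlam hlameq hX
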